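/- arXiv:0804.4245 — 2 statements merged into one kernel-verified Lean document; each statement's English description precedes it below -/
import Mathlib

section
/- Let k ≥ 2, let M be a symmetric k×k matrix over the field ℤ/2 with all diagonal entries zero, and let α ≠ β be two indices. Let A be the matrix M with its (α,β) and (β,α) entries set to 1, and B the matrix M with those entries set to 0. Let E = 1 + e_{βα} (the identity matrix plus the matrix unit with a single 1 in position (β,α)), let C = E·A·Eᵀ, and let D be the matrix C with its (α,β) and (β,α) entries set to 0 (equivalently, D = E·B·Eᵀ). Then the genus generating polynomials satisfy the four-term relation F_A − F_B = F_C − F_D. (This expresses that the generating function for the genera of checkerboard-colourable embeddings of a framed 4-valent graph satisfies the four-term relation, i.e. is a weight system on the algebra of chord diagrams and on the graph algebra.) -/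
open Matrix

/-- The corank over `ℤ/2` of the principal submatrix of `N` on the rows and columns in `I`:
`|I| - rank N_I`. -/
noncomputable def subCorank {V : Type*} [Fintype V] [DecidableEq V]
    (N : Matrix V V (ZMod 2)) (I : Finset V) : ℕ :=
  I.card - (N.submatrix (fun i : I => (i : V)) fun i : I => (i : V)).rank

/-- The genus generating polynomial of a symmetric matrix `N` over `ℤ/2`
(with integer coefficients, so that differences make sense):
`F_N(x) = Σ_{I ⊆ V} x ^ (corank N_I + corank N_{V∖I})`. -/
noncomputable def genusPoly {V : Type*} [Fintype V] [DecidableEq V]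
    (N : Matrix V V (ZMod 2)) : Polynomial ℤ :=
  ∑ I : Finset V, Polynomial.X ^ (subCorank N I + subCorank N Iᶜ)

/-- The matrix `M` with its `(α, β)` and `(β, α)` entries replaced by `v`. -/
def setSym {V : Type*} [DecidableEq V] (M : Matrix V V (ZMod 2)) (α β : V) (v : ZMod 2) :
    Matrix V V (ZMod 2) := fun i j =>
  if (i = α ∧ j = β) ∨ (i = β ∧ j = α) then v else M i j

open Finset

/-!
Write `E = 1 + e_{βα}`. The summand of `F_A - F_B` indexed by `I` vanishes unless `α` and `β`
lie on the same side of the partition `V = I ⊔ Iᶜ`, since otherwise neither `N_I` nor `N_{Iᶜ}`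
sees the entry `(α, β)`; the same holds for `F_C - F_D`. If `α, β` lie on the same side `J`,
then `C_J = E_J A_J E_Jᵀ` and `D_J = E_J B_J E_Jᵀ` (using `D = E B Eᵀ`, which needs
`M α α = 0`), so the coranks on `J` are unchanged, while on the other side the congruence by
`E` only touches the row and column `β`, which are not there.
-/

namespace Matrix

variable {n m R : Type*} [DecidableEq n] [CommRing R]

theorem transpose_transvection (a b : n) (c : R) :
    (transvection a b c)ᵀ = transvection b a c := by
  simp [transvection, transpose_single]

variable [Fintype n]

theorem transvection_mul_mul_transpose_apply (N : Matrix n n R) (a b : n) (c : R) (i j : n) :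
    (transvection b a c * N * (transvection b a c)ᵀ) i j =
      N i j + (if i = b then c * N a j else 0) +
        (if j = b then c * N i a + (if i = b then c * c * N a a else 0) else 0) := by
  rw [transpose_transvection]
  by_cases hj : j = b
  · subst hj
    by_cases hi : i = j
    · subst hi
      simp only [mul_transvection_apply_same, transvection_mul_apply_same, ↓reduceIte,
        add_right_inj]
      ring
    · simp [hi]
  · by_cases hi : i = b
    · subst hi; simp [hj]
    · simp [hi, hj]

theorem transvection_mul_mul_transpose_apply_of_ne (N : Matrix n n R) (a : n) {b : n}
    (c : R) {i j : n} (hi : i ≠ b) (hj : j ≠ b) :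
    (transvection b a c * N * (transvection b a c)ᵀ) i j = N i j := by
  simp [transvection_mul_mul_transpose_apply, hi, hj]

theorem submatrix_transvection_mul_mul_transpose [Fintype m] [DecidableEq m]
    (N : Matrix n n R) {f : m → n} (hf : Function.Injective f) (a b : m) (c : R) :
    (transvection (f b) (f a) c * N * (transvection (f b) (f a) c)ᵀ).submatrix f f =
      transvection b a c * N.submatrix f f * (transvection b a c)ᵀ := by
  ext i j
  simp only [submatrix_apply, transvection_mul_mul_transpose_apply, hf.eq_iff]

theorem rank_transvection_mul_mul_transpose (N : Matrix n n R) {a b : n} (hab : a ≠ b)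
    (c : R) : (transvection b a c * N * (transvection b a c)ᵀ).rank = N.rank := by
  have hE : IsUnit (transvection b a c).det := by simp [hab.symm]
  rw [rank_mul_eq_left_of_isUnit_det _ _ (by rwa [det_transpose]),
    rank_mul_eq_right_of_isUnit_det _ _ hE]

end Matrix

section ZModTwo

variable {V : Type*} [Fintype V] [DecidableEq V]

theorem subCorank_congr {N N' : Matrix V V (ZMod 2)} {I : Finset V}
    (h : ∀ i ∈ I, ∀ j ∈ I, N i j = N' i j) : subCorank N I = subCorank N' I := by
  unfold subCorank
  congr 2
  ext i j
  exact h i i.2 j j.2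

theorem subCorank_transvection_mul_mul_transpose (N : Matrix V V (ZMod 2)) {a b : V}
    (hab : a ≠ b) (c : ZMod 2) (I : Finset V) (hI : b ∈ I → a ∈ I) :
    subCorank (transvection b a c * N * (transvection b a c)ᵀ) I = subCorank N I := by
  by_cases hb : b ∈ I
  · have hsub := submatrix_transvection_mul_mul_transpose N Subtype.val_injective
      (⟨a, hI hb⟩ : I) ⟨b, hb⟩ c
    unfold subCorank
    rw [hsub, rank_transvection_mul_mul_transpose _ (by simpa using hab)]
  · refine subCorank_congr fun i hi j hj => ?_
    exact transvection_mul_mul_transpose_apply_of_ne N a c (ne_of_mem_of_not_mem hi hb)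
      (ne_of_mem_of_not_mem hj hb)

omit [Fintype V] in
theorem setSym_apply_of_not_mem {N : Matrix V V (ZMod 2)} {α β : V} {I : Finset V}
    (hI : α ∉ I ∨ β ∉ I) (v : ZMod 2) {i j : V} (hi : i ∈ I) (hj : j ∈ I) :
    setSym N α β v i j = N i j := by
  unfold setSym
  rw [if_neg]
  rintro (⟨rfl, rfl⟩ | ⟨rfl, rfl⟩) <;> tauto

theorem subCorank_setSym (N : Matrix V V (ZMod 2)) {α β : V} {I : Finset V}
    (hI : α ∉ I ∨ β ∉ I) (v : ZMod 2) : subCorank (setSym N α β v) I = subCorank N I :=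
  subCorank_congr fun _ hi _ hj => setSym_apply_of_not_mem hI v hi hj

theorem setSym_zero_transvection_mul_mul_transpose (M : Matrix V V (ZMod 2))
    {α β : V} (hαβ : α ≠ β) (hα : M α α = 0) :
    setSym (transvection β α 1 * setSym M α β 1 * (transvection β α 1)ᵀ) α β 0 =
      transvection β α 1 * setSym M α β 0 * (transvection β α 1)ᵀ := by
  ext i j
  simp only [setSym, transvection_mul_mul_transpose_apply]
  by_cases hiα : i = α <;> by_cases hiβ : i = β <;> by_cases hjα : j = α <;>
    by_cases hjβ : j = β <;> simp_all [hαβ.symm, add_assoc, CharTwo.add_self_eq_zero]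

end ZModTwo

theorem genusPoly_four_term_general (k : ℕ)
    (M : Matrix (Fin k) (Fin k) (ZMod 2)) (hdiag : ∀ i, M i i = 0)
    (α β : Fin k) (hαβ : α ≠ β) :
    let A := setSym M α β 1
    let B := setSym M α β 0
    let E := (1 : Matrix (Fin k) (Fin k) (ZMod 2)) + Matrix.single β α 1
    let C := E * A * Eᵀ
    let D := setSym C α β 0
    genusPoly A - genusPoly B = genusPoly C - genusPoly D := by
  intro A B E C D
  have hD : D = transvection β α 1 * B * (transvection β α 1)ᵀ :=
    setSym_zero_transvection_mul_mul_transpose M hαβ (hdiag α)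
  unfold genusPoly
  rw [← sum_sub_distrib, ← sum_sub_distrib]
  refine sum_congr rfl fun I _ => ?_
  by_cases hsame : α ∈ I ↔ β ∈ I
  · have hCA (J : Finset (Fin k)) (hJ : β ∈ J → α ∈ J) : subCorank C J = subCorank A J :=
      subCorank_transvection_mul_mul_transpose A hαβ 1 J hJ
    have hDB (J : Finset (Fin k)) (hJ : β ∈ J → α ∈ J) : subCorank D J = subCorank B J :=
      hD ▸ subCorank_transvection_mul_mul_transpose B hαβ 1 J hJ
    have hI : β ∈ I → α ∈ I := hsame.2
    have hIc : β ∈ Iᶜ → α ∈ Iᶜ := by simpa only [mem_compl, not_imp_not] using hsame.1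
    rw [hCA I hI, hCA Iᶜ hIc, hDB I hI, hDB Iᶜ hIc]
  · have hI : α ∉ I ∨ β ∉ I := by tauto
    have hIc : α ∉ Iᶜ ∨ β ∉ Iᶜ := by simp only [mem_compl]; tauto
    simp only [A, B, D, subCorank_setSym _ hI, subCorank_setSym _ hIc, sub_self]

/-- **The four-term relation for the genus generating polynomial.**
Let `M` be a symmetric `k × k` matrix over `ℤ/2` (`k ≥ 2`) with zero diagonal, `α ≠ β`
two indices, `A` the matrix `M` with its `(α,β)`, `(β,α)` entries set to `1`, `B` the
matrix `M` with those entries set to `0`, `E = 1 + e_{βα}`, `C = E·A·Eᵀ` and `D` the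
matrix `C` with its `(α,β)`, `(β,α)` entries set to `0`.  Then
`F_A - F_B = F_C - F_D`. -/
theorem genusPoly_four_term (k : ℕ) (hk : 2 ≤ k)
    (M : Matrix (Fin k) (Fin k) (ZMod 2)) (hM : M.IsSymm) (hdiag : ∀ i, M i i = 0)
    (α β : Fin k) (hαβ : α ≠ β) :
    let A := setSym M α β 1
    let B := setSym M α β 0
    let E := (1 : Matrix (Fin k) (Fin k) (ZMod 2)) + Matrix.single β α 1
    let C := E * A * Eᵀ
    let D := setSym C α β 0
    genusPoly A - genusPoly B = genusPoly C - genusPoly D :=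
  genusPoly_four_term_general k M hdiag α β hαβ
end

section
/- Let k ≥ 2, let M be a symmetric k×k matrix over the field ℤ/2 (arbitrary diagonal, the diagonal entries encoding framings of chords), and let α ≠ β be two indices. Let A be the matrix M with its (α,β) and (β,α) entries set to 1, and B the matrix M with those entries set to 0. Let E = 1 + e_{βα} (the identity matrix plus the matrix unit with a single 1 in position (β,α)), let N = E·A·Eᵀ, let C be the matrix N with its (α,β) and (β,α) entries set to 1, and D the matrix N with those entries set to 0. Then the genus generating polynomials satisfy the generalized four-term relation F_A − F_B = (−1)^m · (F_C − F_D), where m ∈ {0,1} is the diagonal entry M_{αα} regarded as an integer. (This is the generalized four-term relation for framed chord diagrams: when the chord α is negative, the chord β changes its framing in passing from A, B to C, D — as N_{ββ} = M_{ββ} + M_{αα} — and the right-hand side changes overall sign.) -/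
/-!
A summand of `F_X` indexed by `I` depends on `X_{αβ} = X_{βα}` only when `α, β` lie on the same
side of `I`, so in `F_A - F_B` and in `F_C - F_D` only such `I` survive. For those, conjugation by
the transvection `E` restricts to a congruence of `X_I` and of `X_{V∖I}` (or leaves them alone),
so coranks do not change. Since `(E X Eᵀ)_{αβ} = X_{αβ} + X_{αα}` while the other entries do not
see the change of `X_{αβ} = X_{βα}`, we get `C = E A Eᵀ, D = E B Eᵀ` when `M_{αα} = 0`, and the
two swapped when `M_{αα} = 1`.
-/

open Matrix

namespace Matrix

variable {V W R : Type*} [DecidableEq V] [CommRing R]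

theorem transvection_transpose (i j : V) (c : R) : (transvection i j c)ᵀ = transvection j i c := by
  simp [transvection, transpose_single]

variable [Fintype V]

theorem rank_transvection_mul_mul_transvection {i j : V} (hij : i ≠ j) (c : R)
    (X : Matrix V V R) :
    (transvection i j c * X * transvection j i c).rank = X.rank := by
  rw [rank_mul_eq_left_of_isUnit_det _ _ (by simp [hij.symm]),
    rank_mul_eq_right_of_isUnit_det _ _ (by simp [hij])]

theorem submatrix_transvection_mul_mul_transvection_of_notMem {e : W → V} {i j : V}
    (hi : ∀ w, e w ≠ i) (c : R) (X : Matrix V V R) :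
    (transvection i j c * X * transvection j i c).submatrix e e = X.submatrix e e := by
  ext w w'
  simp [hi]

variable [Fintype W] [DecidableEq W]

theorem submatrix_transvection_mul {W' : Type*} {e : W → V} (he : Function.Injective e)
    (e' : W' → V) {a b : W} {i j : V} (ha : e a = i) (hb : e b = j) (c : R) (X : Matrix V V R) :
    (transvection i j c * X).submatrix e e' = transvection a b c * X.submatrix e e' := by
  subst ha hb
  ext w w'
  by_cases hw : w = a
  · subst hw; simp
  · simp [hw, he.ne hw]

theorem submatrix_mul_transvection {W' : Type*} (e' : W' → V) {e : W → V}
    (he : Function.Injective e) {a b : W} {i j : V} (ha : e a = i) (hb : e b = j) (c : R)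
    (X : Matrix V V R) :
    (X * transvection i j c).submatrix e' e = X.submatrix e' e * transvection a b c := by
  subst ha hb
  ext w w'
  by_cases hw : w' = b
  · subst hw; simp
  · simp [hw, he.ne hw]

end Matrix

open Matrix

variable {V : Type*} [DecidableEq V]

theorem setSym_setSym (X : Matrix V V (ZMod 2)) (α β : V) (v w : ZMod 2) :
    setSym (setSym X α β v) α β w = setSym X α β w := by
  ext i j
  simp only [setSym]
  split_ifs <;> rfl

theorem setSym_apply_diag (X : Matrix V V (ZMod 2)) {α β : V} (hαβ : α ≠ β) (v : ZMod 2)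
    (i : V) : setSym X α β v i i = X i i := by
  grind [setSym]

variable [Fintype V]

theorem setSym_transvection_conj (X : Matrix V V (ZMod 2)) {α β : V} (hαβ : α ≠ β)
    (hX : X α β = X β α) (v : ZMod 2) :
    setSym (transvection β α 1 * X * (transvection β α 1)ᵀ) α β v =
      transvection β α 1 * setSym X α β (v + X α α) * (transvection β α 1)ᵀ := by
  rw [transvection_transpose]
  ext i j
  by_cases hi : i = β <;> by_cases hj : j = β <;> simp [setSym, hi, hj, hαβ, hαβ.symm]
  all_goals grind

theorem subCorank_setSym_of_not_both_mem (X : Matrix V V (ZMod 2)) {α β : V} (v : ZMod 2)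
    {I : Finset V} (h : ¬(α ∈ I ∧ β ∈ I)) : subCorank (setSym X α β v) I = subCorank X I := by
  unfold subCorank
  congr 2
  ext i j
  simp only [submatrix_apply, setSym]
  rw [if_neg]
  rintro (⟨rfl, rfl⟩ | ⟨rfl, rfl⟩)
  exacts [h ⟨i.2, j.2⟩, h ⟨j.2, i.2⟩]

theorem subCorank_transvection_conj (X : Matrix V V (ZMod 2)) {α β : V} (hαβ : α ≠ β)
    (c : ZMod 2) {I : Finset V} (h : α ∈ I ↔ β ∈ I) :
    subCorank (transvection β α c * X * (transvection β α c)ᵀ) I = subCorank X I := by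
  unfold subCorank
  rw [transvection_transpose]
  by_cases hβ : β ∈ I
  · have hα := h.mpr hβ
    have hinj : Function.Injective (fun i : I => (i : V)) := Subtype.val_injective
    rw [submatrix_mul_transvection _ hinj (a := ⟨α, hα⟩) (b := ⟨β, hβ⟩) rfl rfl,
      submatrix_transvection_mul hinj _ (a := ⟨β, hβ⟩) (b := ⟨α, hα⟩) rfl rfl,
      rank_transvection_mul_mul_transvection (by simpa using hαβ.symm)]
  · rw [submatrix_transvection_mul_mul_transvection_of_notMem
      fun (i : I) (hi : (i : V) = β) => hβ (hi ▸ i.2)]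

noncomputable def genusTerm (N : Matrix V V (ZMod 2)) (I : Finset V) : Polynomial ℤ :=
  Polynomial.X ^ (subCorank N I + subCorank N Iᶜ)

theorem genusPoly_eq_sum_genusTerm (N : Matrix V V (ZMod 2)) :
    genusPoly N = ∑ I, genusTerm N I :=
  rfl

theorem genusTerm_setSym_of_not_iff (X : Matrix V V (ZMod 2)) {α β : V} (v : ZMod 2)
    {I : Finset V} (h : ¬(α ∈ I ↔ β ∈ I)) : genusTerm (setSym X α β v) I = genusTerm X I := by
  unfold genusTerm
  rw [subCorank_setSym_of_not_both_mem X v (by tauto),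
    subCorank_setSym_of_not_both_mem X v (by simp only [Finset.mem_compl]; tauto)]

theorem genusTerm_transvection_conj (X : Matrix V V (ZMod 2)) {α β : V} (hαβ : α ≠ β)
    (c : ZMod 2) {I : Finset V} (h : α ∈ I ↔ β ∈ I) :
    genusTerm (transvection β α c * X * (transvection β α c)ᵀ) I = genusTerm X I := by
  unfold genusTerm
  rw [subCorank_transvection_conj X hαβ c h,
    subCorank_transvection_conj X hαβ c (by simpa only [Finset.mem_compl, not_iff_not])]

theorem genusPoly_setSym_sub_eq_sum (X : Matrix V V (ZMod 2)) (α β : V)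
    (v w : ZMod 2) :
    genusPoly (setSym X α β v) - genusPoly (setSym X α β w) =
      ∑ I with (α ∈ I ↔ β ∈ I), (genusTerm (setSym X α β v) I - genusTerm (setSym X α β w) I) := by
  rw [Finset.sum_filter, genusPoly_eq_sum_genusTerm, genusPoly_eq_sum_genusTerm,
    ← Finset.sum_sub_distrib]
  refine Finset.sum_congr rfl fun I _ => ?_
  split_ifs with h
  · rfl
  · rw [genusTerm_setSym_of_not_iff X v h, genusTerm_setSym_of_not_iff X w h, sub_self]

theorem genusPoly_setSym_transvection_conj_sub (X : Matrix V V (ZMod 2)) {α β : V}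
    (hαβ : α ≠ β) (hX : X α β = X β α) (v w : ZMod 2) :
    genusPoly (setSym (transvection β α 1 * X * (transvection β α 1)ᵀ) α β v) -
        genusPoly (setSym (transvection β α 1 * X * (transvection β α 1)ᵀ) α β w) =
      genusPoly (setSym X α β (v + X α α)) - genusPoly (setSym X α β (w + X α α)) := by
  rw [genusPoly_setSym_sub_eq_sum, genusPoly_setSym_sub_eq_sum]
  refine Finset.sum_congr rfl fun I hI => ?_
  have hsep := (Finset.mem_filter.mp hI).2
  rw [setSym_transvection_conj X hαβ hX, setSym_transvection_conj X hαβ hX,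
    genusTerm_transvection_conj _ hαβ 1 hsep, genusTerm_transvection_conj _ hαβ 1 hsep]

theorem genusPoly_generalized_four_term_general (k : ℕ)
    (M : Matrix (Fin k) (Fin k) (ZMod 2))
    (α β : Fin k) (hαβ : α ≠ β) :
    let A := setSym M α β 1
    let B := setSym M α β 0
    let E := (1 : Matrix (Fin k) (Fin k) (ZMod 2)) + Matrix.single β α 1
    let N := E * A * Eᵀ
    let C := setSym N α β 1
    let D := setSym N α β 0
    genusPoly A - genusPoly B = (-1 : ℤ) ^ (M α α).val • (genusPoly C - genusPoly D) := by
  intro A B E N C D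
  have hCD : genusPoly C - genusPoly D =
      genusPoly (setSym M α β (1 + M α α)) - genusPoly (setSym M α β (M α α)) := by
    have hA : A α β = A β α := by simp [A, setSym]
    have hAα : A α α = M α α := setSym_apply_diag M hαβ 1 α
    rw [show genusPoly C - genusPoly D = _ from
        genusPoly_setSym_transvection_conj_sub A hαβ hA 1 0,
      setSym_setSym, setSym_setSym, hAα, zero_add]
  rw [hCD]
  rcases (by decide : ∀ m : ZMod 2, m = 0 ∨ m = 1) (M α α) with h | h <;> rw [h]
  · simp [A, B]
  · rw [show (1 + 1 : ZMod 2) = 0 from rfl, show (1 : ZMod 2).val = 1 from rfl, pow_one,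
      neg_one_smul, neg_sub]

/-- **The generalized four-term relation for the genus generating polynomial of framed
chord diagrams.**  Let `M` be a symmetric `k × k` matrix over `ℤ/2` (`k ≥ 2`, arbitrary
diagonal encoding the framings), `α ≠ β` two indices, `A` the matrix `M` with its
`(α,β)`, `(β,α)` entries set to `1`, `B` the matrix `M` with those entries set to `0`,
`E = 1 + e_{βα}`, `N = E·A·Eᵀ`, `C` the matrix `N` with its `(α,β)`, `(β,α)` entries set
to `1` and `D` the matrix `N` with those entries set to `0`.  Then
`F_A - F_B = (-1) ^ m · (F_C - F_D)`, where `m ∈ {0, 1}` is the diagonal entry `M α α`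
regarded as an integer. -/
theorem genusPoly_generalized_four_term (k : ℕ) (hk : 2 ≤ k)
    (M : Matrix (Fin k) (Fin k) (ZMod 2)) (hM : M.IsSymm)
    (α β : Fin k) (hαβ : α ≠ β) :
    let A := setSym M α β 1
    let B := setSym M α β 0
    let E := (1 : Matrix (Fin k) (Fin k) (ZMod 2)) + Matrix.single β α 1
    let N := E * A * Eᵀ
    let C := setSym N α β 1
    let D := setSym N α β 0
    genusPoly A - genusPoly B = (-1 : ℤ) ^ (M α α).val • (genusPoly C - genusPoly D) :=
  genusPoly_generalized_four_term_general k M α β hαβ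
end
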